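/- arXiv:1908.01971 — 3 statements merged into one kernel-verified Lean document; each statement's English description precedes it below -/
import Mathlib

section
/- Let J_1,…,J_n : ℝ^N → [0,1] be functions with pairwise disjoint supports, and define J_{n+1} := √(1 − Σ_{i=1}^{n} J_i²). Let x ∈ ℝ^N be a point at which each J_1,…,J_n is differentiable and J_i(x)² < 1 for every i ∈ {1,…,n}. Then J_{n+1} is differentiable at x and Σ_{i=1}^{n+1} |∇J_i(x)|² = Σ_{i=1}^{n} |∇J_i(x)|²/(1 − J_i(x)²). -/
/-!
Disjoint supports give `Jᵢ(x) Jⱼ(x) = 0` for `i ≠ j`, so at most one `Jₖ(x)` is nonzero. The chain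
rule gives `∇J_{n+1}(x) = -(∑ᵢ Jᵢ(x) ∇Jᵢ(x)) / √(1 - S)` with `S = ∑ᵢ Jᵢ(x)²`, whose squared norm is
`∑ᵢ Jᵢ(x)² |∇Jᵢ(x)|² / (1 - S)` because the cross terms vanish. The identity then holds term by term:
either `Jᵢ(x) = 0`, or `S = Jᵢ(x)²` and `1 + Jᵢ(x)² / (1 - Jᵢ(x)²) = 1 / (1 - Jᵢ(x)²)`.
-/

theorem mul_eq_zero_of_disjoint_support {α M₀ : Type*} [MulZeroClass M₀] {f g : α → M₀}
    (h : Disjoint (Function.support f) (Function.support g)) (x : α) : f x * g x = 0 := by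
  by_contra hne
  exact Set.disjoint_left.mp h (left_ne_zero_of_mul hne) (right_ne_zero_of_mul hne)

section Gradient
variable {E : Type*} [NormedAddCommGroup E] [InnerProductSpace ℝ E] [CompleteSpace E]
  {f : E → ℝ} {g : E} {x : E}

theorem HasDerivAt.comp_hasGradientAt {h : ℝ → ℝ} {h' : ℝ} (hh : HasDerivAt h h' (f x))
    (hf : HasGradientAt f g x) : HasGradientAt (fun y => h (f y)) (h' • g) x := by
  rw [hasGradientAt_iff_hasFDerivAt, map_smul]
  exact hh.comp_hasFDerivAt x hf.hasFDerivAt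

theorem HasGradientAt.fun_sum {ι : Type*} {u : Finset ι} {f : ι → E → ℝ} {g : ι → E}
    (hf : ∀ i ∈ u, HasGradientAt (f i) (g i) x) :
    HasGradientAt (fun y => ∑ i ∈ u, f i y) (∑ i ∈ u, g i) x := by
  rw [hasGradientAt_iff_hasFDerivAt, map_sum]
  exact HasFDerivAt.fun_sum fun i hi => (hf i hi).hasFDerivAt

theorem hasGradientAt_sqrt_one_sub_sum_sq {ι : Type*} [Fintype ι] {f : ι → E → ℝ} {g : ι → E}
    (hf : ∀ i, HasGradientAt (f i) (g i) x) (hx : ∑ i, f i x ^ 2 < 1) :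
    HasGradientAt (fun y => √(1 - ∑ i, f i y ^ 2))
      (-(√(1 - ∑ i, f i x ^ 2))⁻¹ • ∑ i, f i x • g i) x := by
  have hsq : HasGradientAt (fun y => ∑ i, f i y ^ 2) (∑ i, (2 * f i x) • g i) x :=
    HasGradientAt.fun_sum fun i _ => by
      simpa using (hasDerivAt_pow 2 (f i x)).comp_hasGradientAt (hf i)
  have hroot : HasDerivAt (fun t => √(1 - t)) (-1 / (2 * √(1 - ∑ i, f i x ^ 2)))
      (∑ i, f i x ^ 2) :=
    ((hasDerivAt_id _).const_sub 1).sqrt (sub_ne_zero.mpr hx.ne')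
  convert hroot.comp_hasGradientAt (f := fun y => ∑ i, f i y ^ 2) hsq using 1
  have : 0 < √(1 - ∑ i, f i x ^ 2) := Real.sqrt_pos.mpr (sub_pos.mpr hx)
  have htwo : ∑ i, (2 * f i x) • g i = (2 : ℝ) • ∑ i, f i x • g i := by
    simp only [Finset.smul_sum, mul_smul]
  rw [htwo, smul_smul]
  congr 1
  field_simp

end Gradient

section PairwiseMulZero
variable {ι : Type*} [Fintype ι] {a : ι → ℝ}

theorem sum_eq_of_pairwise_mul_eq_zero {M : Type*} [AddCommMonoid M]
    (ha : Pairwise fun i j => a i * a j = 0) {k : ι} (hk : a k ≠ 0) {f : ι → M}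
    (hf : ∀ i, a i = 0 → f i = 0) : ∑ i, f i = f k :=
  Finset.sum_eq_single k (fun i _ hik => hf i ((mul_eq_zero.mp (ha hik)).resolve_right hk))
    (fun h => absurd (Finset.mem_univ k) h)

theorem sum_sq_lt_one_of_pairwise_mul_eq_zero (ha : Pairwise fun i j => a i * a j = 0)
    (h : ∀ i, a i ^ 2 < 1) : ∑ i, a i ^ 2 < 1 := by
  by_cases hzero : ∀ i, a i = 0
  · simp [hzero]
  · obtain ⟨k, hk⟩ := not_forall.mp hzero
    rw [sum_eq_of_pairwise_mul_eq_zero ha hk fun i hi => by simp [hi]]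
    exact h k

theorem norm_sum_smul_sq_of_pairwise_mul_eq_zero {E : Type*} [SeminormedAddCommGroup E]
    [NormedSpace ℝ E] (ha : Pairwise fun i j => a i * a j = 0) (g : ι → E) :
    ‖∑ i, a i • g i‖ ^ 2 = ∑ i, a i ^ 2 * ‖g i‖ ^ 2 := by
  by_cases hzero : ∀ i, a i = 0
  · simp [hzero]
  · obtain ⟨k, hk⟩ := not_forall.mp hzero
    rw [sum_eq_of_pairwise_mul_eq_zero ha hk fun i hi => by simp [hi],
      sum_eq_of_pairwise_mul_eq_zero ha hk fun i hi => by simp [hi], norm_smul, mul_pow,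
      Real.norm_eq_abs, sq_abs]

theorem add_inv_one_sub_sum_sq_mul_of_pairwise_mul_eq_zero
    (ha : Pairwise fun i j => a i * a j = 0) {i : ι} (hi : a i ^ 2 < 1) (c : ℝ) :
    c + (1 - ∑ j, a j ^ 2)⁻¹ * (a i ^ 2 * c) = c / (1 - a i ^ 2) := by
  by_cases hzero : a i = 0
  · simp [hzero]
  · rw [sum_eq_of_pairwise_mul_eq_zero ha hzero fun j hj => by simp [hj]]
    have : 1 - a i ^ 2 ≠ 0 := sub_ne_zero.mpr hi.ne'
    field_simp
    ring

end PairwiseMulZero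

theorem partition_last_gradient_identity_general {N n : ℕ}
    (J : Fin n → EuclideanSpace ℝ (Fin N) → ℝ)
    (hdisj : ∀ i j, i ≠ j → Disjoint (Function.support (J i)) (Function.support (J j)))
    (x : EuclideanSpace ℝ (Fin N))
    (hdiff : ∀ i, DifferentiableAt ℝ (J i) x)
    (hlt : ∀ i, J i x ^ 2 < 1) :
    DifferentiableAt ℝ (fun y => Real.sqrt (1 - ∑ i, J i y ^ 2)) x ∧
    (∑ i, ‖gradient (J i) x‖ ^ 2)
        + ‖gradient (fun y => Real.sqrt (1 - ∑ i, J i y ^ 2)) x‖ ^ 2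
      = ∑ i, ‖gradient (J i) x‖ ^ 2 / (1 - J i x ^ 2) := by
  have ha : Pairwise fun i j => J i x * J j x = 0 := fun i j hij =>
    mul_eq_zero_of_disjoint_support (hdisj i j hij) x
  have hS := sum_sq_lt_one_of_pairwise_mul_eq_zero ha hlt
  have hG := hasGradientAt_sqrt_one_sub_sum_sq (fun i => (hdiff i).hasGradientAt) hS
  refine ⟨hG.differentiableAt, ?_⟩
  rw [hG.gradient, norm_smul, mul_pow, norm_neg, norm_inv,
    Real.norm_of_nonneg (Real.sqrt_nonneg _), inv_pow, Real.sq_sqrt (sub_pos.mpr hS).le,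
    norm_sum_smul_sq_of_pairwise_mul_eq_zero ha, Finset.mul_sum, ← Finset.sum_add_distrib]
  exact Finset.sum_congr rfl fun i _ =>
    add_inv_one_sub_sum_sq_mul_of_pairwise_mul_eq_zero ha (hlt i) _

/-- Property d) of the partitions of unity used in the IMS method: if `J₁,…,Jₙ` take
values in `[0,1]`, have pairwise disjoint supports, and `J_{n+1} = √(1 - ∑ᵢ Jᵢ²)`,
then at every point `x` where all the `Jᵢ` are differentiable and `Jᵢ(x)² < 1`,
`J_{n+1}` is differentiable and
`∑_{i=1}^{n+1} |∇Jᵢ(x)|² = ∑_{i=1}^{n} |∇Jᵢ(x)|²/(1 - Jᵢ(x)²)`. -/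
theorem partition_last_gradient_identity {N n : ℕ}
    (J : Fin n → EuclideanSpace ℝ (Fin N) → ℝ)
    (hrange : ∀ i x, J i x ∈ Set.Icc (0 : ℝ) 1)
    (hdisj : ∀ i j, i ≠ j → Disjoint (Function.support (J i)) (Function.support (J j)))
    (x : EuclideanSpace ℝ (Fin N))
    (hdiff : ∀ i, DifferentiableAt ℝ (J i) x)
    (hlt : ∀ i, J i x ^ 2 < 1) :
    DifferentiableAt ℝ (fun y => Real.sqrt (1 - ∑ i, J i y ^ 2)) x ∧
    (∑ i, ‖gradient (J i) x‖ ^ 2)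
        + ‖gradient (fun y => Real.sqrt (1 - ∑ i, J i y ^ 2)) x‖ ^ 2
      = ∑ i, ‖gradient (J i) x‖ ^ 2 / (1 - J i x ^ 2) :=
  partition_last_gradient_identity_general J hdisj x hdiff hlt
end

section
/- Let N ≥ 3, n ≥ 1, let a_1,…,a_n ∈ ℝ^N be distinct points, let k_2 > 2−N, and let μ : ℝ^N → (0,∞) be a locally integrable weight function, positive almost everywhere, satisfying hypothesis H3 at some pole a_i: sup{ δ ∈ ℝ : ∫_K |x−a_i|^{−δ} dμ < ∞ for every compact K ⊂ ℝ^N } = N + k_2. Then for every c > c_o(N+k_2) := ((N+k_2−2)/2)² and every λ ∈ ℝ, there exists a compactly supported Lipschitz function φ : ℝ^N → ℝ with 0 < ∫_{ℝ^N} φ² dμ < ∞ such that ∫_{ℝ^N} |∇φ|² dμ − c·Σ_{j=1}^n ∫_{ℝ^N} φ²/|x−a_j|² dμ < λ·∫_{ℝ^N} φ² dμ. In particular, the multipolar Hardy inequality c·Σ_{j=1}^n ∫ φ²/|x−a_j|² dμ ≤ ∫ |∇φ|² dμ + K·∫ φ² dμ fails for every constant K when c > c_o(N+k_2). -/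
open MeasureTheory Filter Metric

noncomputable section

/-- Euclidean space `ℝ^N`. -/
abbrev Euc (N : ℕ) := EuclideanSpace ℝ (Fin N)

/-- The measure `dμ = μ(x) dx` on `ℝ^N`. -/
noncomputable def wMeasure {N : ℕ} (μ : Euc N → ℝ) : Measure (Euc N) :=
  volume.withDensity fun x => ENNReal.ofReal (μ x)

/-!
Write `p = aᵢ`, `q = N + k₂` and `r = ‖x - p‖`, and pick `η < 0` with `η² < c` and
`-q < 2η < 2 - q`. The test functions `φ_ε = (ε + r)^η θ`, where the cut-off `θ` equals `1` on
`B(p, ρ)` and vanishes outside `B(p, 2ρ)`, have `∫ φ_ε² dμ ≤ ∫_{B(p, 2ρ)} r^{2η} dμ`, which is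
finite by H3 since `-2η < q`. On `B(p, ρ)` one has `|∇φ_ε|² = η² (ε + r)^{2η-2}` and
`φ_ε² / r² ≥ (ε + r)^{2η-2}`, while on the annulus `|∇φ_ε|` is bounded independently of `ε`. Hence
`∫ |∇φ_ε|² - c ∑ⱼ ∫ φ_ε² / |x - aⱼ|² ≤ (η² - c) I_ε + O(1)` with
`I_ε = ∫_{B(p, ρ)} (ε + r)^{2η-2} dμ`, and `I_ε → ∞` as `ε → 0` by monotone convergence, because
`r^{2η-2}` is not integrable near `p` by H3 (`2 - 2η > q`). Taking `3ρ` below the distance from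
`p` to the other poles keeps their Hardy terms finite.
-/

open Set NNReal ENNReal Topology

lemma Real.rpow_pow_two {x : ℝ} (hx : 0 ≤ x) (y : ℝ) : (x ^ y) ^ 2 = x ^ (2 * y) := by
  rw [← Real.rpow_mul_natCast hx, mul_comm]; norm_num

lemma Real.rpow_le_rpow_add_one {t a b : ℝ} (ht : 0 ≤ t) (hb : b ≤ 0) (hab : a ≤ b) :
    t ^ b ≤ t ^ a + 1 := by
  have ha : 0 ≤ t ^ a := Real.rpow_nonneg ht a
  rcases ht.eq_or_lt with rfl | ht0
  · linarith [Real.zero_rpow_le_one b]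
  rcases le_or_gt t 1 with ht1 | ht1
  · linarith [Real.rpow_le_rpow_of_exponent_ge ht0 ht1 hab]
  · linarith [Real.rpow_le_one_of_one_le_of_nonpos ht1.le hb]

lemma div_sq_eq_mul_rpow_neg_two (a : ℝ) {t : ℝ} (ht : 0 ≤ t) : a / t ^ 2 = a * t ^ (-2 : ℝ) := by
  rw [Real.rpow_neg ht, div_eq_mul_inv]; norm_cast

lemma exists_neg_exponent {q c : ℝ} (hq : 2 < q) (hc : ((q - 2) / 2) ^ 2 < c) :
    ∃ η : ℝ, η < 0 ∧ η ^ 2 < c ∧ -q < 2 * η ∧ q < 2 - 2 * η := by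
  have hsqrt : (q - 2) / 2 < √c := Real.lt_sqrt (by linarith) |>.2 hc
  obtain ⟨η, hlow, hhigh⟩ := exists_between
    (show max (-√c) (-(q / 2)) < 1 - q / 2 from max_lt (by linarith) (by linarith))
  rw [max_lt_iff] at hlow
  refine ⟨η, by linarith, ?_, by linarith, by linarith⟩
  calc η ^ 2 < √c ^ 2 := sq_lt_sq' hlow.1 (by linarith)
    _ = c := Real.sq_sqrt (by nlinarith)

lemma exists_pos_forall_ne_mul_le_dist {ι X : Type*} [Finite ι] [MetricSpace X] {a : ι → X}
    (ha : Function.Injective a) (i : ι) (C : ℝ) :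
    ∃ ρ > 0, ∀ j, j ≠ i → C * ρ ≤ dist (a j) (a i) := by
  have hsmall : ∀ᶠ ρ in 𝓝 (0 : ℝ), ∀ j, j ≠ i → C * ρ ≤ dist (a j) (a i) := by
    refine Filter.eventually_all.2 fun j => ?_
    by_cases hj : j = i
    · exact Filter.Eventually.of_forall fun _ h => (h hj).elim
    have hlim : Tendsto (fun ρ : ℝ => C * ρ) (𝓝 0) (𝓝 0) := by
      simpa using (continuous_const_mul C).tendsto (0 : ℝ)
    exact (hlim.eventually (ge_mem_nhds (dist_pos.2 (ha.ne hj)))).mono fun _ h _ => h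
  obtain ⟨ρ, hρ, hρpos⟩ :=
    ((hsmall.filter_mono (nhdsWithin_le_nhds (s := Ioi 0))).and self_mem_nhdsWithin).exists
  exact ⟨ρ, hρpos, hρ⟩

lemma lipschitzOnWith_rpow_Ici {m η : ℝ} (hm : 0 < m) (hη : η ≤ 1) :
    LipschitzOnWith (Real.toNNReal (|η| * m ^ (η - 1))) (fun t : ℝ => t ^ η) (Ici m) := by
  refine (convex_Ici m).lipschitzOnWith_of_nnnorm_hasDerivWithin_le
    (fun t ht => (Real.hasDerivAt_rpow_const (Or.inl (hm.trans_le ht).ne')).hasDerivWithinAt)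
    fun t ht => ?_
  rw [← NNReal.coe_le_coe, coe_nnnorm, Real.coe_toNNReal _ (by positivity), Real.norm_eq_abs,
    abs_mul, abs_of_nonneg (Real.rpow_nonneg (hm.le.trans ht) _)]
  exact mul_le_mul_of_nonneg_left (Real.rpow_le_rpow_of_nonpos hm ht (by linarith)) (abs_nonneg η)

lemma LipschitzOnWith.mul_of_norm_le {α R : Type*} [PseudoMetricSpace α] [SeminormedRing R]
    {f g : α → R} {s : Set α} {Kf Kg A B : ℝ≥0} (hf : LipschitzOnWith Kf f s)
    (hg : LipschitzOnWith Kg g s) (hfA : ∀ x ∈ s, ‖f x‖ ≤ A) (hgB : ∀ x ∈ s, ‖g x‖ ≤ B) :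
    LipschitzOnWith (A * Kg + B * Kf) (fun x => f x * g x) s := by
  refine LipschitzOnWith.of_dist_le_mul fun x hx y hy => ?_
  rw [dist_eq_norm,
    show f x * g x - f y * g y = f x * (g x - g y) + (f x - f y) * g y by noncomm_ring]
  calc ‖f x * (g x - g y) + (f x - f y) * g y‖
      ≤ ‖f x‖ * ‖g x - g y‖ + ‖f x - f y‖ * ‖g y‖ :=
        (norm_add_le _ _).trans (add_le_add (norm_mul_le _ _) (norm_mul_le _ _))
    _ ≤ A * (Kg * dist x y) + Kf * dist x y * B := by
        rw [← dist_eq_norm, ← dist_eq_norm]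
        gcongr
        exacts [hfA x hx, hg.dist_le_mul x hx y hy, hf.dist_le_mul x hx y hy, hgB y hy]
    _ = ↑(A * Kg + B * Kf) * dist x y := by push_cast; ring

lemma lipschitzWith_const_add_norm_sub {E : Type*} [SeminormedAddCommGroup E] (t : ℝ) (p : E) :
    LipschitzWith 1 (fun x : E => t + ‖x - p‖) := by
  simpa [Function.comp_def] using (isometry_add_left t).lipschitz.comp
    (lipschitzWith_one_norm.comp (IsometryEquiv.subRight p).isometry.lipschitz)

lemma norm_gradient_eq_norm_fderiv {F : Type*} [NormedAddCommGroup F] [InnerProductSpace ℝ F]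
    [CompleteSpace F] (f : F → ℝ) (x : F) : ‖gradient f x‖ = ‖fderiv ℝ f x‖ :=
  (InnerProductSpace.toDual ℝ F).symm.norm_map _

lemma measurable_gradient {F : Type*} [NormedAddCommGroup F] [InnerProductSpace ℝ F]
    [CompleteSpace F] [MeasurableSpace F] [BorelSpace F] (f : F → ℝ) :
    Measurable (gradient f) :=
  (InnerProductSpace.toDual ℝ F).symm.continuous.measurable.comp (measurable_fderiv ℝ f)

lemma tendsto_integral_atTop_of_monotone_of_not_integrable {α : Type*} [MeasurableSpace α]
    {μ : Measure α} {f : ℕ → α → ℝ} {F : α → ℝ} (hf : ∀ n, Integrable (f n) μ)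
    (hf_nonneg : ∀ n, 0 ≤ᵐ[μ] f n) (h_mono : ∀ᵐ x ∂μ, Monotone fun n => f n x)
    (h_tendsto : ∀ᵐ x ∂μ, Tendsto (fun n => f n x) atTop (𝓝 (F x)))
    (hF : ¬ Integrable F μ) : Tendsto (fun n => ∫ x, f n x ∂μ) atTop atTop := by
  refine tendsto_atTop_atTop_of_monotone'
    (fun m n hmn => integral_mono_ae (hf m) (hf n) (h_mono.mono fun x hx => hx hmn)) ?_
  rintro ⟨A, hA⟩
  have hF_nonneg : 0 ≤ᵐ[μ] F := by
    filter_upwards [h_tendsto, ae_all_iff.2 hf_nonneg] with x hx h0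
    exact ge_of_tendsto' hx h0
  have hF_meas : AEStronglyMeasurable F μ :=
    aestronglyMeasurable_of_tendsto_ae atTop (fun n => (hf n).1) h_tendsto
  have hlim := lintegral_tendsto_of_tendsto_of_monotone
    (fun n => ((hf n).1.aemeasurable.ennreal_ofReal))
    (h_mono.mono fun x hx m n hmn => ENNReal.ofReal_le_ofReal (hx hmn))
    (h_tendsto.mono fun x hx => (ENNReal.continuous_ofReal.tendsto _).comp hx)
  refine hF ((lintegral_ofReal_ne_top_iff_integrable hF_meas hF_nonneg).1
    (ne_top_of_le_ne_top (ofReal_ne_top (r := A)) (le_of_tendsto' hlim fun n => ?_)))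
  rw [← ofReal_integral_eq_lintegral_ofReal (hf n) (hf_nonneg n)]
  exact ENNReal.ofReal_le_ofReal (hA ⟨n, rfl⟩)

section SingularPower

variable {E : Type*} [NormedAddCommGroup E] [MeasurableSpace E] {ν : Measure E} {p : E}

lemma tendsto_setIntegral_add_norm_sub_rpow_atTop [OpensMeasurableSpace E] {τ : ℝ} {B : Set E}
    (hτ : τ ≤ 0) (hp : ν {p} = 0) (hB : ν B ≠ ⊤)
    (hint : ¬ IntegrableOn (fun x => ‖x - p‖ ^ τ) B ν) :
    Tendsto (fun m : ℕ => ∫ x in B, (1 / ((m : ℝ) + 1) + ‖x - p‖) ^ τ ∂ν) atTop atTop := by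
  refine tendsto_integral_atTop_of_monotone_of_not_integrable (fun m => ?_)
    (fun m => ae_of_all _ fun x => by positivity) (ae_of_all _ fun x m n hmn => ?_) ?_ hint
  · refine Measure.integrableOn_of_bounded (M := (1 / ((m : ℝ) + 1)) ^ τ) hB
      ((measurable_const.add (continuous_id.sub continuous_const).norm.measurable).pow_const
        τ).aestronglyMeasurable (ae_of_all _ fun x => ?_)
    rw [Real.norm_of_nonneg (by positivity)]
    exact Real.rpow_le_rpow_of_nonpos (by positivity) (by simp) hτ
  · exact Real.rpow_le_rpow_of_nonpos (by positivity) (by gcongr) hτ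
  · have hp' : ∀ᵐ x ∂ν.restrict B, x ≠ p := ae_restrict_of_ae (by simpa [ae_iff] using hp)
    filter_upwards [hp'] with x hx
    have hr : ‖x - p‖ ≠ 0 := norm_ne_zero_iff.2 (sub_ne_zero.2 hx)
    have hlim := (tendsto_one_div_add_atTop_nhds_zero_nat (𝕜 := ℝ)).add_const ‖x - p‖
    rw [zero_add] at hlim
    exact (Real.continuousAt_rpow_const _ _ (Or.inl hr)).tendsto.comp hlim

/-- The set whose supremum is the critical exponent of hypothesis H3 at `p`. -/
def integrableSingularityExponents (ν : Measure E) (p : E) : Set ℝ :=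
  {δ | ∀ K : Set E, IsCompact K → IntegrableOn (fun x => ‖x - p‖ ^ (-δ)) K ν}

lemma zero_mem_integrableSingularityExponents [IsFiniteMeasureOnCompacts ν] :
    0 ∈ integrableSingularityExponents ν p :=
  fun K hK => by simpa using integrableOn_const (C := (1 : ℝ)) hK.measure_lt_top.ne

lemma IntegrableOn.norm_sub_rpow_neg_of_le [OpensMeasurableSpace E] {δ δ₀ : ℝ} {K : Set E}
    (hδ : 0 ≤ δ) (hδδ₀ : δ ≤ δ₀) (hK : ν K ≠ ⊤)
    (h : IntegrableOn (fun x => ‖x - p‖ ^ (-δ₀)) K ν) :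
    IntegrableOn (fun x => ‖x - p‖ ^ (-δ)) K ν :=
  Integrable.mono' (h.add (integrableOn_const (C := (1 : ℝ)) hK))
    ((continuous_id.sub continuous_const).norm.measurable.pow_const _).aestronglyMeasurable <|
    ae_of_all _ fun x => by
      rw [Real.norm_of_nonneg (Real.rpow_nonneg (norm_nonneg _) _)]
      exact Real.rpow_le_rpow_add_one (norm_nonneg _) (by linarith) (by linarith)

variable [OpensMeasurableSpace E] [IsFiniteMeasureOnCompacts ν]

lemma integrableOn_norm_sub_rpow_neg_of_lt_sSup {δ : ℝ} {K : Set E} (hδ : 0 ≤ δ)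
    (hδS : δ < sSup (integrableSingularityExponents ν p)) (hK : IsCompact K) :
    IntegrableOn (fun x => ‖x - p‖ ^ (-δ)) K ν := by
  obtain ⟨δ₀, hδ₀, hδδ₀⟩ :=
    exists_lt_of_lt_csSup ⟨0, zero_mem_integrableSingularityExponents⟩ hδS
  exact IntegrableOn.norm_sub_rpow_neg_of_le hδ hδδ₀.le hK.measure_lt_top.ne (hδ₀ K hK)

lemma not_integrableOn_closedBall_of_sSup_lt {δ ρ : ℝ}
    (hS : BddAbove (integrableSingularityExponents ν p)) (hδ : 0 ≤ δ)
    (hSδ : sSup (integrableSingularityExponents ν p) < δ) (hρ : 0 < ρ) :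
    ¬ IntegrableOn (fun x => ‖x - p‖ ^ (-δ)) (closedBall p ρ) ν := by
  intro hball
  obtain ⟨K, hK, hKint⟩ : ∃ K, IsCompact K ∧ ¬ IntegrableOn (fun x => ‖x - p‖ ^ (-δ)) K ν := by
    simpa [integrableSingularityExponents] using fun h => (le_csSup hS h).not_gt hSδ
  have hfar : IntegrableOn (fun x => ‖x - p‖ ^ (-δ)) (K \ closedBall p ρ) ν := by
    refine Measure.integrableOn_of_bounded (M := ρ ^ (-δ))
      ((measure_mono sdiff_subset).trans_lt hK.measure_lt_top).ne
      ((continuous_id.sub continuous_const).norm.measurable.pow_const _).aestronglyMeasurable ?_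
    filter_upwards [ae_restrict_mem (hK.measurableSet.diff measurableSet_closedBall)] with x hx
    have hxρ : ρ < ‖x - p‖ := by simpa [dist_eq_norm] using hx.2
    rw [Real.norm_of_nonneg (by positivity)]
    exact Real.rpow_le_rpow_of_nonpos hρ hxρ.le (by linarith)
  exact hKint ((hball.union hfar).mono_set fun x hx => by
    by_cases h : x ∈ closedBall p ρ
    exacts [Or.inl h, Or.inr ⟨hx, h⟩])

end SingularPower

section TestFunction

variable {E : Type*} [NormedAddCommGroup E] {p x : E} {ε η ρ : ℝ}

def radialCutoff (p : E) (ρ : ℝ) (x : E) : ℝ := min 1 (max 0 (2 - ‖x - p‖ / ρ))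

lemma radialCutoff_nonneg : 0 ≤ radialCutoff p ρ x := le_min zero_le_one (le_max_left _ _)

lemma radialCutoff_le_one : radialCutoff p ρ x ≤ 1 := min_le_left _ _

lemma radialCutoff_eq_one (hρ : 0 < ρ) (hx : ‖x - p‖ ≤ ρ) : radialCutoff p ρ x = 1 := by
  have : ‖x - p‖ / ρ ≤ 1 := (div_le_one hρ).2 hx
  rw [radialCutoff, max_eq_right (by linarith), min_eq_left (by linarith)]

lemma radialCutoff_eq_zero (hρ : 0 < ρ) (hx : 2 * ρ ≤ ‖x - p‖) : radialCutoff p ρ x = 0 := by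
  have : 2 ≤ ‖x - p‖ / ρ := (le_div_iff₀ hρ).2 hx
  rw [radialCutoff, max_eq_left (by linarith), min_eq_right zero_le_one]

lemma lipschitzWith_radialCutoff (hρ : 0 < ρ) :
    LipschitzWith (Real.toNNReal ρ⁻¹) (radialCutoff p ρ) := by
  have h : LipschitzWith (Real.toNNReal ρ⁻¹) fun x : E => 2 - ‖x - p‖ / ρ := by
    refine LipschitzWith.of_dist_le_mul fun x y => ?_
    rw [Real.coe_toNNReal _ (by positivity), Real.dist_eq, dist_eq_norm,
      show 2 - ‖x - p‖ / ρ - (2 - ‖y - p‖ / ρ) = ρ⁻¹ * (‖y - p‖ - ‖x - p‖) by ring, abs_mul,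
      abs_inv, abs_of_pos hρ]
    gcongr
    exact (abs_norm_sub_norm_le _ _).trans_eq (by rw [sub_sub_sub_cancel_right, norm_sub_rev])
  exact (h.const_max 0).const_min 1

/-- The paper's witness `φ_ε = (ε + |x - p|)^η θ`, with the cut-off `θ` at radii `ρ` and `2ρ`
instead of `1` and `2`. -/
def hardyTestFunction (p : E) (ε η ρ : ℝ) (x : E) : ℝ :=
  (ε + ‖x - p‖) ^ η * radialCutoff p ρ x

lemma hardyTestFunction_of_norm_sub_le (hρ : 0 < ρ) (hx : ‖x - p‖ ≤ ρ) :
    hardyTestFunction p ε η ρ x = (ε + ‖x - p‖) ^ η := by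
  rw [hardyTestFunction, radialCutoff_eq_one hρ hx, mul_one]

lemma hardyTestFunction_of_le_norm_sub (hρ : 0 < ρ) (hx : 2 * ρ ≤ ‖x - p‖) :
    hardyTestFunction p ε η ρ x = 0 := by
  rw [hardyTestFunction, radialCutoff_eq_zero hρ hx, mul_zero]

lemma hardyTestFunction_nonneg (hε : 0 ≤ ε) : 0 ≤ hardyTestFunction p ε η ρ x :=
  mul_nonneg (by positivity) radialCutoff_nonneg

lemma hardyTestFunction_le (hε : 0 ≤ ε) : hardyTestFunction p ε η ρ x ≤ (ε + ‖x - p‖) ^ η :=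
  mul_le_of_le_one_right (by positivity) radialCutoff_le_one

lemma sq_hardyTestFunction_le_indicator (hε : 0 ≤ ε) (hη : η ≤ 0) (hρ : 0 < ρ) (hxp : x ≠ p) :
    hardyTestFunction p ε η ρ x ^ 2 ≤
      (closedBall p (2 * ρ)).indicator (fun y => ‖y - p‖ ^ (2 * η)) x := by
  by_cases hx : x ∈ closedBall p (2 * ρ)
  · have hr : 0 < ‖x - p‖ := norm_pos_iff.2 (sub_ne_zero.2 hxp)
    rw [indicator_of_mem hx, ← Real.rpow_pow_two hr.le]
    gcongr
    · exact hardyTestFunction_nonneg hε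
    · exact (hardyTestFunction_le hε).trans (Real.rpow_le_rpow_of_nonpos hr (by linarith) hη)
  · rw [indicator_of_notMem hx, hardyTestFunction_of_le_norm_sub hρ
      (not_le.1 (by simpa [dist_eq_norm] using hx)).le]
    simp

lemma lipschitzOnWith_hardyTestFunction (hη : η ≤ 0) (hρ : 0 < ρ) {r : ℝ} (hr : 0 < ε + r) :
    LipschitzOnWith (Real.toNNReal ((ε + r) ^ η * ρ⁻¹ + |η| * (ε + r) ^ (η - 1)))
      (hardyTestFunction p ε η ρ) {x | r ≤ ‖x - p‖} := by
  have hmaps : MapsTo (fun x : E => ε + ‖x - p‖) {x | r ≤ ‖x - p‖} (Ici (ε + r)) :=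
    fun x hx => by simp only [mem_Ici]; linarith [show r ≤ ‖x - p‖ from hx]
  have hpow := (lipschitzOnWith_rpow_Ici hr (hη.trans zero_le_one)).comp
    (lipschitzWith_const_add_norm_sub ε p).lipschitzOnWith hmaps
  have h₁ : 0 ≤ (ε + r) ^ η := Real.rpow_nonneg hr.le _
  have hprod := hpow.mul_of_norm_le (lipschitzWith_radialCutoff (p := p) hρ).lipschitzOnWith
    (A := Real.toNNReal ((ε + r) ^ η)) (B := 1) (fun x hx => ?_) fun x _ => ?_
  · have h₂ : 0 ≤ |η| * (ε + r) ^ (η - 1) := by positivity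
    refine hprod.weaken ?_
    rw [← NNReal.coe_le_coe]
    simp only [NNReal.coe_add, NNReal.coe_mul, one_mul, mul_one]
    rw [Real.coe_toNNReal _ h₁, Real.coe_toNNReal _ (by positivity), Real.coe_toNNReal _ h₂,
      Real.coe_toNNReal _ (by positivity)]
  · have hx' : ε + r ≤ ε + ‖x - p‖ := hmaps hx
    rw [Function.comp_apply, Real.norm_of_nonneg (Real.rpow_nonneg (by linarith) _),
      Real.coe_toNNReal _ h₁]
    exact Real.rpow_le_rpow_of_nonpos hr hx' hη
  · rw [Real.norm_of_nonneg radialCutoff_nonneg, NNReal.coe_one]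
    exact radialCutoff_le_one

lemma exists_lipschitzWith_hardyTestFunction (hε : 0 < ε) (hη : η ≤ 0) (hρ : 0 < ρ) :
    ∃ K, LipschitzWith K (hardyTestFunction p ε η ρ) :=
  ⟨_, lipschitzOnWith_univ.1 ((lipschitzOnWith_hardyTestFunction (p := p) hη hρ
    (show 0 < ε + 0 by linarith)).mono fun x _ => norm_nonneg (x - p))⟩

lemma continuous_hardyTestFunction (hε : 0 < ε) (hη : η ≤ 0) (hρ : 0 < ρ) :
    Continuous (hardyTestFunction p ε η ρ) :=
  (exists_lipschitzWith_hardyTestFunction hε hη hρ).choose_spec.continuous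

lemma hasCompactSupport_hardyTestFunction [ProperSpace E] (hρ : 0 < ρ) :
    HasCompactSupport (hardyTestFunction p ε η ρ) :=
  HasCompactSupport.intro (isCompact_closedBall p (2 * ρ)) fun x hx =>
    hardyTestFunction_of_le_norm_sub hρ (not_le.1 (by simpa [dist_eq_norm] using hx)).le

lemma norm_fderiv_hardyTestFunction_le_of_lt [InnerProductSpace ℝ E] (hε : 0 ≤ ε) (hρ : 0 < ρ)
    (hxp : x ≠ p) (hx : ‖x - p‖ < ρ) :
    ‖fderiv ℝ (hardyTestFunction p ε η ρ) x‖ ≤ |η| * (ε + ‖x - p‖) ^ (η - 1) := by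
  have hpos : 0 < ε + ‖x - p‖ :=
    add_pos_of_nonneg_of_pos hε (norm_pos_iff.2 (sub_ne_zero.2 hxp))
  have hnear : hardyTestFunction p ε η ρ =ᶠ[𝓝 x] fun y => (ε + ‖y - p‖) ^ η := by
    filter_upwards [(isOpen_lt (continuous_id.sub continuous_const).norm continuous_const).mem_nhds
      hx] with y hy using hardyTestFunction_of_norm_sub_le hρ hy.le
  have hdist : HasFDerivAt (fun y : E => ε + ‖y - p‖)
      (fderiv ℝ (fun y : E => ε + ‖y - p‖) x) x :=
    (((differentiableAt_id.sub_const p).norm ℝ (sub_ne_zero.2 hxp)).const_add ε).hasFDerivAt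
  have hdist_le : ‖fderiv ℝ (fun y : E => ε + ‖y - p‖) x‖ ≤ 1 := by
    simpa using norm_fderiv_le_of_lipschitz ℝ (lipschitzWith_const_add_norm_sub ε p) (x₀ := x)
  have hpow : HasFDerivAt (fun y : E => (ε + ‖y - p‖) ^ η)
      ((η * (ε + ‖x - p‖) ^ (η - 1)) • fderiv ℝ (fun y : E => ε + ‖y - p‖) x) x :=
    HasDerivAt.comp_hasFDerivAt (h₂ := fun t : ℝ => t ^ η) x
      (Real.hasDerivAt_rpow_const (Or.inl hpos.ne')) hdist
  rw [hnear.fderiv_eq, hpow.fderiv, norm_smul, Real.norm_eq_abs, abs_mul,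
    abs_of_pos (Real.rpow_pos_of_pos hpos _)]
  exact mul_le_of_le_one_right (by positivity) hdist_le

lemma norm_fderiv_hardyTestFunction_le_of_gt [NormedSpace ℝ E] (hε : 0 ≤ ε) (hη : η ≤ 0)
    (hρ : 0 < ρ) (hx : ρ < ‖x - p‖) :
    ‖fderiv ℝ (hardyTestFunction p ε η ρ) x‖ ≤ ρ ^ η * ρ⁻¹ + |η| * ρ ^ (η - 1) := by
  have hnhds : {y : E | ρ ≤ ‖y - p‖} ∈ 𝓝 x :=
    mem_of_superset ((isOpen_lt continuous_const (continuous_id.sub continuous_const).norm).mem_nhds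
      hx) fun y (hy : ρ < ‖y - p‖) => hy.le
  refine (norm_fderiv_le_of_lipschitzOn ℝ hnhds
    (lipschitzOnWith_hardyTestFunction hη hρ (by linarith))).trans ?_
  rw [Real.coe_toNNReal _ (by positivity)]
  exact add_le_add
    (mul_le_mul_of_nonneg_right (Real.rpow_le_rpow_of_nonpos hρ (by linarith) hη) (by positivity))
    (mul_le_mul_of_nonneg_left (Real.rpow_le_rpow_of_nonpos hρ (by linarith) (by linarith))
      (abs_nonneg η))

lemma fderiv_hardyTestFunction_eq_zero [NormedSpace ℝ E] (hρ : 0 < ρ) (hx : 2 * ρ < ‖x - p‖) :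
    fderiv ℝ (hardyTestFunction p ε η ρ) x = 0 := by
  have hfar : hardyTestFunction p ε η ρ =ᶠ[𝓝 x] fun _ => 0 := by
    filter_upwards [(isOpen_lt continuous_const (continuous_id.sub continuous_const).norm).mem_nhds
      hx] with y hy using hardyTestFunction_of_le_norm_sub hρ hy.le
  rw [hfar.fderiv_eq, fderiv_const_apply]

def hardyGradientBound (p : E) (ε η ρ : ℝ) (x : E) : ℝ :=
  (closedBall p ρ).indicator (fun y => η ^ 2 * (ε + ‖y - p‖) ^ (2 * η - 2)) x +
    (closedBall p (2 * ρ)).indicator (fun _ => (ρ ^ η * ρ⁻¹ + |η| * ρ ^ (η - 1)) ^ 2) x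

lemma sq_norm_fderiv_hardyTestFunction_le [InnerProductSpace ℝ E] (hε : 0 ≤ ε) (hη : η ≤ 0)
    (hρ : 0 < ρ) (hxp : x ≠ p) (hxρ : ‖x - p‖ ≠ ρ) :
    ‖fderiv ℝ (hardyTestFunction p ε η ρ) x‖ ^ 2 ≤ hardyGradientBound p ε η ρ x := by
  have hind : 0 ≤ (closedBall p ρ).indicator (fun y => η ^ 2 * (ε + ‖y - p‖) ^ (2 * η - 2)) x :=
    indicator_nonneg (fun y _ => by positivity) x
  rw [hardyGradientBound]
  rcases lt_or_gt_of_ne hxρ with hlt | hgt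
  · have hx : x ∈ closedBall p ρ := by rw [mem_closedBall, dist_eq_norm]; exact hlt.le
    have hx₂ : x ∈ closedBall p (2 * ρ) := by rw [mem_closedBall, dist_eq_norm]; linarith
    have hpos : 0 < ε + ‖x - p‖ :=
      add_pos_of_nonneg_of_pos hε (norm_pos_iff.2 (sub_ne_zero.2 hxp))
    rw [indicator_of_mem hx, indicator_of_mem hx₂]
    calc ‖fderiv ℝ (hardyTestFunction p ε η ρ) x‖ ^ 2
        ≤ (|η| * (ε + ‖x - p‖) ^ (η - 1)) ^ 2 := by
          gcongr; exact norm_fderiv_hardyTestFunction_le_of_lt hε hρ hxp hlt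
      _ = η ^ 2 * (ε + ‖x - p‖) ^ (2 * η - 2) := by
          rw [mul_pow, sq_abs, Real.rpow_pow_two hpos.le]; ring_nf
      _ ≤ _ := le_add_of_nonneg_right (sq_nonneg _)
  · rcases le_or_gt ‖x - p‖ (2 * ρ) with hle | hfar
    · have hx₂ : x ∈ closedBall p (2 * ρ) := by rw [mem_closedBall, dist_eq_norm]; exact hle
      rw [indicator_of_mem hx₂]
      exact le_add_of_nonneg_of_le hind
        (by gcongr; exact norm_fderiv_hardyTestFunction_le_of_gt hε hη hρ hgt)
    · rw [fderiv_hardyTestFunction_eq_zero hρ hfar, norm_zero, zero_pow two_ne_zero]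
      exact add_nonneg hind (indicator_nonneg (fun _ _ => sq_nonneg _) x)

end TestFunction

section Integrals

variable {E : Type*} [NormedAddCommGroup E] [MeasurableSpace E] [OpensMeasurableSpace E]
  {ν : Measure E} {p : E} {ε η ρ : ℝ}

lemma aestronglyMeasurable_sq_hardyTestFunction_div (hε : 0 < ε) (hη : η ≤ 0) (hρ : 0 < ρ)
    (q : E) : AEStronglyMeasurable (fun x => hardyTestFunction p ε η ρ x ^ 2 / ‖x - q‖ ^ 2) ν :=
  (((continuous_hardyTestFunction hε hη hρ).pow 2).measurable.div
    ((continuous_id.sub continuous_const).norm.pow 2).measurable).aestronglyMeasurable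

lemma integrable_sq_hardyTestFunction_div_norm_sub_sq_self (hε : 0 < ε) (hη : η ≤ 0)
    (hρ : 0 < ρ) (hint : IntegrableOn (fun x => ‖x - p‖ ^ (-2 : ℝ)) (closedBall p (2 * ρ)) ν) :
    Integrable (fun x => hardyTestFunction p ε η ρ x ^ 2 / ‖x - p‖ ^ 2) ν := by
  refine Integrable.mono'
    (((integrable_indicator_iff measurableSet_closedBall).2 hint).const_mul (f := _)
      (ε ^ (2 * η))) (aestronglyMeasurable_sq_hardyTestFunction_div hε hη hρ p)
    (ae_of_all _ fun x => ?_)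
  rw [Real.norm_of_nonneg (by positivity), div_sq_eq_mul_rpow_neg_two _ (norm_nonneg (x - p))]
  by_cases hx : x ∈ closedBall p (2 * ρ)
  · have hφ : hardyTestFunction p ε η ρ x ^ 2 ≤ ε ^ (2 * η) := by
      rw [← Real.rpow_pow_two hε.le]
      gcongr
      · exact hardyTestFunction_nonneg hε.le
      · exact (hardyTestFunction_le hε.le).trans
          (Real.rpow_le_rpow_of_nonpos hε (by linarith [norm_nonneg (x - p)]) hη)
    rw [indicator_of_mem hx]
    exact mul_le_mul_of_nonneg_right hφ (by positivity)
  · rw [indicator_of_notMem hx, hardyTestFunction_of_le_norm_sub hρ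
      (not_le.1 (by simpa [dist_eq_norm] using hx)).le]
    simp

variable [ProperSpace E] [IsFiniteMeasureOnCompacts ν]

lemma integrableOn_add_norm_sub_rpow_closedBall (hε : 0 < ε) (τ r : ℝ) :
    IntegrableOn (fun x => (ε + ‖x - p‖) ^ τ) (closedBall p r) ν :=
  ((continuous_const.add (continuous_id.sub continuous_const).norm).rpow_const fun _ =>
    Or.inl (add_pos_of_pos_of_nonneg hε (norm_nonneg _)).ne').continuousOn.integrableOn_compact
      (isCompact_closedBall _ _)

lemma integrable_sq_hardyTestFunction (hε : 0 < ε) (hη : η ≤ 0) (hρ : 0 < ρ) :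
    Integrable (fun x => hardyTestFunction p ε η ρ x ^ 2) ν := by
  have hsupp : HasCompactSupport (fun x => hardyTestFunction p ε η ρ x ^ 2) :=
    (hasCompactSupport_hardyTestFunction hρ).comp_left (g := fun t : ℝ => t ^ 2) (by norm_num)
  exact ((continuous_hardyTestFunction hε hη hρ).pow 2).integrable_of_hasCompactSupport hsupp

lemma integral_sq_hardyTestFunction_pos [ν.IsOpenPosMeasure] (hε : 0 < ε) (hη : η ≤ 0)
    (hρ : 0 < ρ) : 0 < ∫ x, hardyTestFunction p ε η ρ x ^ 2 ∂ν := by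
  refine integral_pos_of_integrable_nonneg_nonzero (x := p)
    ((continuous_hardyTestFunction hε hη hρ).pow 2) (integrable_sq_hardyTestFunction hε hη hρ)
    (fun x => sq_nonneg _) ?_
  rw [hardyTestFunction_of_norm_sub_le hρ (by simpa using hρ.le)]
  positivity

lemma integral_sq_hardyTestFunction_le (hε : 0 < ε) (hη : η ≤ 0) (hρ : 0 < ρ) (hp : ν {p} = 0)
    (hint : IntegrableOn (fun x => ‖x - p‖ ^ (2 * η)) (closedBall p (2 * ρ)) ν) :
    ∫ x, hardyTestFunction p ε η ρ x ^ 2 ∂ν ≤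
      ∫ x in closedBall p (2 * ρ), ‖x - p‖ ^ (2 * η) ∂ν := by
  rw [← integral_indicator measurableSet_closedBall]
  refine integral_mono_ae (integrable_sq_hardyTestFunction hε hη hρ)
    ((integrable_indicator_iff measurableSet_closedBall).2 hint) ?_
  filter_upwards [show ∀ᵐ x ∂ν, x ≠ p by simpa [ae_iff] using hp] with x hxp
  exact sq_hardyTestFunction_le_indicator hε.le hη hρ hxp

lemma integrable_sq_hardyTestFunction_div_norm_sub_sq_of_le_dist (hε : 0 < ε) (hη : η ≤ 0)
    (hρ : 0 < ρ) {q : E} (hq : 3 * ρ ≤ dist q p) :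
    Integrable (fun x => hardyTestFunction p ε η ρ x ^ 2 / ‖x - q‖ ^ 2) ν := by
  refine Integrable.mono'
    ((integrable_sq_hardyTestFunction (p := p) hε hη hρ).const_mul (ρ ^ 2)⁻¹)
    (aestronglyMeasurable_sq_hardyTestFunction_div hε hη hρ q) (ae_of_all _ fun x => ?_)
  rw [Real.norm_of_nonneg (by positivity), div_eq_mul_inv, mul_comm]
  by_cases hx : ‖x - p‖ < 2 * ρ
  · have hxq : ρ ≤ ‖x - q‖ := by
      have h := dist_triangle q x p
      simp only [dist_comm q x, dist_eq_norm] at h hq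
      linarith
    gcongr
  · simp [hardyTestFunction_of_le_norm_sub hρ (not_lt.1 hx)]

lemma setIntegral_add_norm_sub_rpow_le_integral (hε : 0 < ε) (hρ : 0 < ρ) (hp : ν {p} = 0)
    (hint : Integrable (fun x => hardyTestFunction p ε η ρ x ^ 2 / ‖x - p‖ ^ 2) ν) :
    ∫ x in closedBall p ρ, (ε + ‖x - p‖) ^ (2 * η - 2) ∂ν ≤
      ∫ x, hardyTestFunction p ε η ρ x ^ 2 / ‖x - p‖ ^ 2 ∂ν := by
  refine (setIntegral_mono_ae_restrict (integrableOn_add_norm_sub_rpow_closedBall hε _ _)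
    hint.integrableOn ?_).trans
    (setIntegral_le_integral hint (ae_of_all _ fun x => div_nonneg (sq_nonneg _) (sq_nonneg _)))
  filter_upwards [ae_restrict_of_ae (show ∀ᵐ x ∂ν, x ≠ p by simpa [ae_iff] using hp),
    ae_restrict_mem measurableSet_closedBall] with x hxp hx
  have hr : 0 < ‖x - p‖ := norm_pos_iff.2 (sub_ne_zero.2 hxp)
  rw [hardyTestFunction_of_norm_sub_le hρ (by simpa [dist_eq_norm] using hx),
    Real.rpow_pow_two (by positivity), div_sq_eq_mul_rpow_neg_two _ hr.le,
    show 2 * η - 2 = 2 * η + (-2) by ring, Real.rpow_add (by positivity)]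
  exact mul_le_mul_of_nonneg_left (Real.rpow_le_rpow_of_nonpos hr (by linarith) (by norm_num))
    (by positivity)

lemma integrable_hardyGradientBound (hε : 0 < ε) : Integrable (hardyGradientBound p ε η ρ) ν :=
  ((integrable_indicator_iff measurableSet_closedBall).2
    ((integrableOn_add_norm_sub_rpow_closedBall hε _ _).const_mul _)).add
    ((integrable_indicator_iff measurableSet_closedBall).2
      (integrableOn_const (isCompact_closedBall _ _).measure_lt_top.ne))

lemma integral_hardyGradientBound (hε : 0 < ε) :
    ∫ x, hardyGradientBound p ε η ρ x ∂ν =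
      η ^ 2 * ∫ x in closedBall p ρ, (ε + ‖x - p‖) ^ (2 * η - 2) ∂ν +
        (ρ ^ η * ρ⁻¹ + |η| * ρ ^ (η - 1)) ^ 2 * ν.real (closedBall p (2 * ρ)) := by
  unfold hardyGradientBound
  rw [integral_add ((integrable_indicator_iff measurableSet_closedBall).2
      ((integrableOn_add_norm_sub_rpow_closedBall hε _ _).const_mul _))
      ((integrable_indicator_iff measurableSet_closedBall).2
        (integrableOn_const (isCompact_closedBall _ _).measure_lt_top.ne)),
    integral_indicator measurableSet_closedBall, integral_indicator measurableSet_closedBall,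
    integral_const_mul, setIntegral_const, smul_eq_mul, mul_comm (ν.real _)]

end Integrals

section Gradient

variable {E : Type*} [NormedAddCommGroup E] [InnerProductSpace ℝ E] [ProperSpace E]
  [MeasurableSpace E] {ν : Measure E} {p : E} {ε η ρ : ℝ}

lemma ae_sq_norm_gradient_hardyTestFunction_le (hε : 0 ≤ ε) (hη : η ≤ 0) (hρ : 0 < ρ)
    (hp : ν {p} = 0) (hsphere : ν (sphere p ρ) = 0) :
    ∀ᵐ x ∂ν, ‖gradient (hardyTestFunction p ε η ρ) x‖ ^ 2 ≤ hardyGradientBound p ε η ρ x := by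
  have hnull : ∀ᵐ x ∂ν, x ∉ ({p} ∪ sphere p ρ : Set E) :=
    measure_eq_zero_iff_ae_notMem.1 (measure_union_null hp hsphere)
  filter_upwards [hnull] with x hx
  simp only [mem_union, mem_singleton_iff, mem_sphere, dist_eq_norm, not_or] at hx
  rw [norm_gradient_eq_norm_fderiv]
  exact sq_norm_fderiv_hardyTestFunction_le hε hη hρ hx.1 hx.2

variable [BorelSpace E] [IsFiniteMeasureOnCompacts ν]

lemma integrable_sq_norm_gradient_hardyTestFunction (hε : 0 < ε) (hη : η ≤ 0) (hρ : 0 < ρ)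
    (hp : ν {p} = 0) (hsphere : ν (sphere p ρ) = 0) :
    Integrable (fun x => ‖gradient (hardyTestFunction p ε η ρ) x‖ ^ 2) ν := by
  refine Integrable.mono' (g := hardyGradientBound p ε η ρ) (integrable_hardyGradientBound hε)
    ((measurable_gradient _).norm.pow_const 2).aestronglyMeasurable ?_
  filter_upwards [ae_sq_norm_gradient_hardyTestFunction_le hε.le hη hρ hp hsphere] with x hx
  rwa [Real.norm_of_nonneg (sq_nonneg _)]

lemma integral_sq_norm_gradient_hardyTestFunction_le (hε : 0 < ε) (hη : η ≤ 0) (hρ : 0 < ρ)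
    (hp : ν {p} = 0) (hsphere : ν (sphere p ρ) = 0) :
    ∫ x, ‖gradient (hardyTestFunction p ε η ρ) x‖ ^ 2 ∂ν ≤
      η ^ 2 * ∫ x in closedBall p ρ, (ε + ‖x - p‖) ^ (2 * η - 2) ∂ν +
        (ρ ^ η * ρ⁻¹ + |η| * ρ ^ (η - 1)) ^ 2 * ν.real (closedBall p (2 * ρ)) := by
  rw [← integral_hardyGradientBound hε]
  exact integral_mono_ae (integrable_sq_norm_gradient_hardyTestFunction hε hη hρ hp hsphere)
    (integrable_hardyGradientBound hε)
    (ae_sq_norm_gradient_hardyTestFunction_le hε.le hη hρ hp hsphere)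

lemma integral_sq_norm_gradient_sub_hardy_sum_le {n : ℕ} {a : Fin n → E} {i : Fin n} {c : ℝ}
    (hε : 0 < ε) (hη : η ≤ 0) (hρ : 0 < ρ) (hp : ν {a i} = 0)
    (hsphere : ν (sphere (a i) ρ) = 0) (hc : 0 ≤ c)
    (hint : Integrable (fun x => hardyTestFunction (a i) ε η ρ x ^ 2 / ‖x - a i‖ ^ 2) ν) :
    ∫ x, ‖gradient (hardyTestFunction (a i) ε η ρ) x‖ ^ 2 ∂ν -
        c * ∑ j, ∫ x, hardyTestFunction (a i) ε η ρ x ^ 2 / ‖x - a j‖ ^ 2 ∂ν ≤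
      (η ^ 2 - c) * ∫ x in closedBall (a i) ρ, (ε + ‖x - a i‖) ^ (2 * η - 2) ∂ν +
        (ρ ^ η * ρ⁻¹ + |η| * ρ ^ (η - 1)) ^ 2 * ν.real (closedBall (a i) (2 * ρ)) := by
  have hsum := (setIntegral_add_norm_sub_rpow_le_integral hε hρ hp hint).trans
    (Finset.single_le_sum
      (f := fun j => ∫ x, hardyTestFunction (a i) ε η ρ x ^ 2 / ‖x - a j‖ ^ 2 ∂ν)
      (fun j _ => integral_nonneg fun x => div_nonneg (sq_nonneg _) (sq_nonneg _))
      (Finset.mem_univ i))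
  nlinarith [integral_sq_norm_gradient_hardyTestFunction_le hε hη hρ hp hsphere,
    mul_le_mul_of_nonneg_left hsum hc]

end Gradient

theorem exists_hardyTestFunction_hardy_quotient_lt {E : Type*} [NormedAddCommGroup E]
    [InnerProductSpace ℝ E] [ProperSpace E] [MeasurableSpace E] [BorelSpace E]
    {ν : Measure E} [IsFiniteMeasureOnCompacts ν] [ν.IsOpenPosMeasure] {n : ℕ} {a : Fin n → E}
    (ha : Function.Injective a) (i : Fin n) (hsphere : ∀ r, ν (sphere (a i) r) = 0) {q : ℝ}
    (hq : 2 < q) (hS : sSup (integrableSingularityExponents ν (a i)) = q) {c : ℝ}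
    (hc : ((q - 2) / 2) ^ 2 < c) (lam : ℝ) :
    ∃ φ : E → ℝ, (∃ L : NNReal, LipschitzWith L φ) ∧ HasCompactSupport φ ∧
      Integrable (fun x => φ x ^ 2) ν ∧ 0 < ∫ x, φ x ^ 2 ∂ν ∧
      Integrable (fun x => ‖gradient φ x‖ ^ 2) ν ∧
      (∀ j : Fin n, Integrable (fun x => φ x ^ 2 / ‖x - a j‖ ^ 2) ν) ∧
      ∫ x, ‖gradient φ x‖ ^ 2 ∂ν - c * ∑ j, ∫ x, φ x ^ 2 / ‖x - a j‖ ^ 2 ∂ν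
        < lam * ∫ x, φ x ^ 2 ∂ν := by
  set p := a i
  obtain ⟨ρ, hρ, hsep⟩ := exists_pos_forall_ne_mul_le_dist ha i 3
  obtain ⟨η, hη, hηc, hηq, hηq'⟩ := exists_neg_exponent hq hc
  have hp : ν {p} = 0 := by simpa using hsphere 0
  have hSbdd : BddAbove (integrableSingularityExponents ν p) := by
    by_contra h
    rw [Real.sSup_of_not_bddAbove h] at hS
    linarith
  have hint₂ : IntegrableOn (fun x => ‖x - p‖ ^ (-2 : ℝ)) (closedBall p (2 * ρ)) ν :=
    integrableOn_norm_sub_rpow_neg_of_lt_sSup zero_le_two (by linarith) (isCompact_closedBall _ _)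
  have hint₂η : IntegrableOn (fun x => ‖x - p‖ ^ (2 * η)) (closedBall p (2 * ρ)) ν := by
    simpa using integrableOn_norm_sub_rpow_neg_of_lt_sSup (δ := -(2 * η)) (by linarith)
      (by linarith) (isCompact_closedBall p (2 * ρ))
  have hnot : ¬ IntegrableOn (fun x => ‖x - p‖ ^ (2 * η - 2)) (closedBall p ρ) ν := by
    simpa using not_integrableOn_closedBall_of_sSup_lt (δ := 2 - 2 * η) hSbdd (by linarith)
      (by linarith) hρ
  set C := (ρ ^ η * ρ⁻¹ + |η| * ρ ^ (η - 1)) ^ 2 * ν.real (closedBall p (2 * ρ))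
  set M := ∫ x in closedBall p (2 * ρ), ‖x - p‖ ^ (2 * η) ∂ν
  obtain ⟨m, hm⟩ := ((tendsto_setIntegral_add_norm_sub_rpow_atTop (by linarith) hp
    measure_closedBall_lt_top.ne hnot).eventually_gt_atTop ((C + |lam| * M) / (c - η ^ 2))).exists
  set ε : ℝ := 1 / ((m : ℝ) + 1)
  have hε : 0 < ε := by positivity
  set I := ∫ x in closedBall p ρ, (ε + ‖x - p‖) ^ (2 * η - 2) ∂ν
  set φ := hardyTestFunction p ε η ρ
  have hHp := integrable_sq_hardyTestFunction_div_norm_sub_sq_self hε hη.le hρ hint₂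
  refine ⟨φ, exists_lipschitzWith_hardyTestFunction hε hη.le hρ,
    hasCompactSupport_hardyTestFunction hρ, integrable_sq_hardyTestFunction hε hη.le hρ,
    integral_sq_hardyTestFunction_pos hε hη.le hρ,
    integrable_sq_norm_gradient_hardyTestFunction hε hη.le hρ hp (hsphere ρ), fun j => ?_, ?_⟩
  · by_cases hj : j = i
    · rw [hj]; exact hHp
    · exact integrable_sq_hardyTestFunction_div_norm_sub_sq_of_le_dist hε hη.le hρ (hsep j hj)
  have hF : ∫ x, φ x ^ 2 ∂ν ≤ M := integral_sq_hardyTestFunction_le hε hη.le hρ hp hint₂η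
  have hI : C + |lam| * M < (c - η ^ 2) * I := (div_lt_iff₀' (by linarith)).1 hm
  calc ∫ x, ‖gradient φ x‖ ^ 2 ∂ν - c * ∑ j, ∫ x, φ x ^ 2 / ‖x - a j‖ ^ 2 ∂ν
      ≤ (η ^ 2 - c) * I + C := integral_sq_norm_gradient_sub_hardy_sum_le hε hη.le hρ hp
        (hsphere ρ) ((sq_nonneg _).trans hc.le) hHp
    _ < -|lam| * M := by linarith
    _ ≤ -|lam| * ∫ x, φ x ^ 2 ∂ν := mul_le_mul_of_nonpos_left hF (neg_nonpos.2 (abs_nonneg lam))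
    _ ≤ lam * ∫ x, φ x ^ 2 ∂ν :=
        mul_le_mul_of_nonneg_right (neg_abs_le lam) (integral_nonneg fun x => sq_nonneg _)

section WeightedMeasure

variable {X : Type*} [TopologicalSpace X] [MeasurableSpace X] {m : Measure X} {f : X → ℝ}

lemma isFiniteMeasureOnCompacts_withDensity_ofReal [SFinite m] (hf : LocallyIntegrable f m) :
    IsFiniteMeasureOnCompacts (m.withDensity fun x => ENNReal.ofReal (f x)) := by
  refine ⟨fun K hK => ?_⟩
  rw [withDensity_apply' _ K]
  exact (lintegral_mono fun x => Real.ofReal_le_enorm (f x)).trans_lt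
    (hf.integrableOn_isCompact hK).hasFiniteIntegral

lemma isOpenPosMeasure_withDensity_ofReal [m.IsOpenPosMeasure] (hf : AEMeasurable f m)
    (hpos : ∀ᵐ x ∂m, 0 < f x) : (m.withDensity fun x => ENNReal.ofReal (f x)).IsOpenPosMeasure :=
  (withDensity_absolutelyContinuous' hf.ennreal_ofReal
    (hpos.mono fun _ hx => (ENNReal.ofReal_pos.2 hx).ne')).isOpenPosMeasure

end WeightedMeasure

theorem multipolar_hardy_constant_optimal_general {N n : ℕ} (hN : 3 ≤ N)
    (a : Fin n → Euc N) (ha : Function.Injective a)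
    (k2 : ℝ) (hk2 : 2 - (N : ℝ) < k2)
    (μ : Euc N → ℝ) (hμpos : ∀ᵐ x ∂(volume : Measure (Euc N)), 0 < μ x)
    (hμloc : LocallyIntegrable μ volume)
    (i : Fin n)
    (hH3 : sSup {δ : ℝ | ∀ K : Set (Euc N), IsCompact K →
        IntegrableOn (fun x => ‖x - a i‖ ^ (-δ)) K (wMeasure μ)} = (N : ℝ) + k2) :
    ∀ c : ℝ, (((N : ℝ) + k2 - 2) / 2) ^ 2 < c →
      (∀ lam : ℝ,
        ∃ φ : Euc N → ℝ, (∃ L : NNReal, LipschitzWith L φ) ∧ HasCompactSupport φ ∧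
          Integrable (fun x => φ x ^ 2) (wMeasure μ) ∧
          0 < ∫ x, φ x ^ 2 ∂(wMeasure μ) ∧
          Integrable (fun x => ‖gradient φ x‖ ^ 2) (wMeasure μ) ∧
          (∀ j : Fin n, Integrable (fun x => φ x ^ 2 / ‖x - a j‖ ^ 2) (wMeasure μ)) ∧
          ∫ x, ‖gradient φ x‖ ^ 2 ∂(wMeasure μ)
              - c * ∑ j, ∫ x, φ x ^ 2 / ‖x - a j‖ ^ 2 ∂(wMeasure μ)
            < lam * ∫ x, φ x ^ 2 ∂(wMeasure μ)) ∧
      (∀ K : ℝ, ¬ ∀ φ : Euc N → ℝ,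
          (∃ L : NNReal, LipschitzWith L φ) → HasCompactSupport φ →
            c * ∑ j, ∫ x, φ x ^ 2 / ‖x - a j‖ ^ 2 ∂(wMeasure μ)
              ≤ ∫ x, ‖gradient φ x‖ ^ 2 ∂(wMeasure μ)
                + K * ∫ x, φ x ^ 2 ∂(wMeasure μ)) := by
  intro c hc
  have : Nonempty (Fin N) := ⟨⟨0, by omega⟩⟩
  have : IsFiniteMeasureOnCompacts (wMeasure μ) :=
    isFiniteMeasureOnCompacts_withDensity_ofReal hμloc
  have : (wMeasure μ).IsOpenPosMeasure :=
    isOpenPosMeasure_withDensity_ofReal hμloc.aestronglyMeasurable.aemeasurable hμpos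
  have hsphere (r : ℝ) : wMeasure μ (sphere (a i) r) = 0 :=
    withDensity_absolutelyContinuous _ _ (Measure.addHaar_sphere volume (a i) r)
  have key := exists_hardyTestFunction_hardy_quotient_lt ha i hsphere (by linarith) hH3 hc
  refine ⟨key, fun K hK => ?_⟩
  obtain ⟨φ, hlip, hsupp, -, -, -, -, hlt⟩ := key (-K)
  linarith [hK φ hlip hsupp]

/-- Theorem 5.1 (optimality of the constant): under hypothesis `H3` at some pole `aᵢ`,
for every `c > c_o(N+k₂) = ((N+k₂-2)/2)²` the bottom of the spectrum is `-∞`: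
for every `λ` there is a compactly supported Lipschitz `φ` with `0 < ∫ φ² dμ < ∞` and
`∫ |∇φ|² dμ - c ∑ⱼ ∫ φ²/|x-aⱼ|² dμ < λ ∫ φ² dμ`.
In particular, the multipolar Hardy inequality fails for every constant `K`. -/
theorem multipolar_hardy_constant_optimal {N n : ℕ} (hN : 3 ≤ N) (hn : 1 ≤ n)
    (a : Fin n → Euc N) (ha : Function.Injective a)
    (k2 : ℝ) (hk2 : 2 - (N : ℝ) < k2)
    (μ : Euc N → ℝ) (hμpos : ∀ᵐ x ∂(volume : Measure (Euc N)), 0 < μ x)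
    (hμloc : LocallyIntegrable μ volume)
    (i : Fin n)
    (hH3 : sSup {δ : ℝ | ∀ K : Set (Euc N), IsCompact K →
        IntegrableOn (fun x => ‖x - a i‖ ^ (-δ)) K (wMeasure μ)} = (N : ℝ) + k2) :
    ∀ c : ℝ, (((N : ℝ) + k2 - 2) / 2) ^ 2 < c →
      (∀ lam : ℝ,
        ∃ φ : Euc N → ℝ, (∃ L : NNReal, LipschitzWith L φ) ∧ HasCompactSupport φ ∧
          Integrable (fun x => φ x ^ 2) (wMeasure μ) ∧
          0 < ∫ x, φ x ^ 2 ∂(wMeasure μ) ∧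
          Integrable (fun x => ‖gradient φ x‖ ^ 2) (wMeasure μ) ∧
          (∀ j : Fin n, Integrable (fun x => φ x ^ 2 / ‖x - a j‖ ^ 2) (wMeasure μ)) ∧
          ∫ x, ‖gradient φ x‖ ^ 2 ∂(wMeasure μ)
              - c * ∑ j, ∫ x, φ x ^ 2 / ‖x - a j‖ ^ 2 ∂(wMeasure μ)
            < lam * ∫ x, φ x ^ 2 ∂(wMeasure μ)) ∧
      (∀ K : ℝ, ¬ ∀ φ : Euc N → ℝ,
          (∃ L : NNReal, LipschitzWith L φ) → HasCompactSupport φ →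
            c * ∑ j, ∫ x, φ x ^ 2 / ‖x - a j‖ ^ 2 ∂(wMeasure μ)
              ≤ ∫ x, ‖gradient φ x‖ ^ 2 ∂(wMeasure μ)
                + K * ∫ x, φ x ^ 2 ∂(wMeasure μ)) :=
  multipolar_hardy_constant_optimal_general hN a ha k2 hk2 μ hμpos hμloc i hH3
end
end

section
/- Let a ∈ ℝ^N, let μ : ℝ^N → [0,∞) be locally integrable with dμ := μ(x)dx, let η < 0 and c > η², and assume ∫_{B(a,1)} |x−a|^{2η−2} dμ = +∞. Then ∫_{B(a,1)} (ε+|x−a|)^{2η}·[η²/(ε+|x−a|)² − c/|x−a|²] dμ(x) tends to −∞ as ε → 0⁺; in particular, for every M ∈ ℝ there exists ε_0 > 0 such that the integral is less than −M for all 0 < ε < ε_0. -/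
/-!
For `ε ≤ |x - a|` we have `ε + |x - a| ≤ 2|x - a|`, and since `2η < 0` the integrand is at least
`2^{2η} (c - η²) |x - a|^{2η-2}`. Hence the integral over `B(a,1)` dominates a fixed positive
multiple of `∫_{B(a,1) \ B(a,ε)} |x - a|^{2η-2} dμ`, which tends to the divergent integral over
`B(a,1) \ {a}` as `ε → 0⁺` by continuity of measures from below.
-/

open MeasureTheory Filter Metric

noncomputable section

open Set Topology

/-- `(ε + r)^{2η} [c / r² - η² / (ε + r)²]`, the negative of the paper's integrand at `r = |x - a|`. -/
def blowupIntegrand (η c ε r : ℝ) : ℝ :=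
  (ε + r) ^ (2 * η) * (c / r ^ 2 - η ^ 2 / (ε + r) ^ 2)

theorem mul_rpow_sub_two_le_blowupIntegrand {η c ε r : ℝ} (hη : η ≤ 0) (hc : η ^ 2 ≤ c)
    (hε : 0 < ε) (hεr : ε ≤ r) :
    2 ^ (2 * η) * (c - η ^ 2) * r ^ (2 * η - 2) ≤ blowupIntegrand η c ε r := by
  have hr : 0 < r := hε.trans_le hεr
  have hεr' : 0 < ε + r := by linarith
  have hpow : 2 ^ (2 * η) * r ^ (2 * η) ≤ (ε + r) ^ (2 * η) := by
    rw [← Real.mul_rpow zero_le_two hr.le]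
    exact Real.rpow_le_rpow_of_nonpos hεr' (by linarith) (by linarith)
  have hfrac : (c - η ^ 2) / r ^ 2 ≤ c / r ^ 2 - η ^ 2 / (ε + r) ^ 2 := by
    have : η ^ 2 / (ε + r) ^ 2 ≤ η ^ 2 / r ^ 2 := by gcongr; linarith
    rw [sub_div]
    linarith
  calc 2 ^ (2 * η) * (c - η ^ 2) * r ^ (2 * η - 2)
      = (2 ^ (2 * η) * r ^ (2 * η)) * ((c - η ^ 2) / r ^ 2) := by
        rw [Real.rpow_sub hr, Real.rpow_two]; ring
    _ ≤ blowupIntegrand η c ε r :=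
        mul_le_mul hpow hfrac (div_nonneg (by linarith) (by positivity)) (by positivity)

theorem tendsto_measure_diff_ball_nhdsGT {X : Type*} [MetricSpace X] [MeasurableSpace X]
    (ν : Measure X) (s : Set X) (a : X) :
    Tendsto (fun ε => ν (s \ ball a ε)) (𝓝[>] 0) (𝓝 (ν (s \ {a}))) := by
  have : (atBot : Filter (Ioi (0 : ℝ))).IsCountablyGenerated := by
    rw [← comap_coe_Ioi_nhdsGT]
    infer_instance
  have hunion : ⋃ ε : Ioi (0 : ℝ), s \ ball a ε = s \ {a} := by
    rw [← sdiff_iInter, ← closedBall_zero, ← biInter_gt_ball, iInter_subtype]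
    rfl
  rw [← map_coe_Ioi_atBot, tendsto_map'_iff, ← hunion]
  exact tendsto_measure_iUnion_atBot fun ε δ hεδ => sdiff_subset_sdiff_right (ball_subset_ball hεδ)

theorem mul_withDensity_diff_ball_le_setLIntegral_blowupIntegrand {E : Type*}
    [NormedAddCommGroup E] [MeasurableSpace E] [OpensMeasurableSpace E] (m : Measure E) (a : E)
    {s : Set E} (hs : MeasurableSet s) {η c ε : ℝ} (hη : η ≤ 0) (hc : η ^ 2 ≤ c) (hε : 0 < ε) :
    ENNReal.ofReal (2 ^ (2 * η) * (c - η ^ 2)) *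
        m.withDensity (fun x => ENNReal.ofReal (‖x - a‖ ^ (2 * η - 2))) (s \ ball a ε) ≤
      ∫⁻ x in s, ENNReal.ofReal (blowupIntegrand η c ε ‖x - a‖) ∂m := by
  have hsε : MeasurableSet (s \ ball a ε) := hs.diff measurableSet_ball
  have hg : Measurable fun x => ENNReal.ofReal (‖x - a‖ ^ (2 * η - 2)) :=
    ((continuous_id.sub continuous_const).norm.measurable.pow_const _).ennreal_ofReal
  rw [withDensity_apply _ hsε, ← lintegral_const_mul _ hg]
  calc _ ≤ ∫⁻ x in s \ ball a ε, ENNReal.ofReal (blowupIntegrand η c ε ‖x - a‖) ∂m := by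
        refine setLIntegral_mono' hsε fun x hx => ?_
        have hεx : ε ≤ ‖x - a‖ := by simpa [dist_eq_norm] using hx.2
        rw [← ENNReal.ofReal_mul (by have := sub_nonneg.2 hc; positivity)]
        exact ENNReal.ofReal_le_ofReal (mul_rpow_sub_two_le_blowupIntegrand hη hc hε hεx)
    _ ≤ _ := lintegral_mono_set sdiff_subset

theorem optimality_integral_blowup_general {N : ℕ} (a : Euc N)
    (μ : Euc N → ℝ)
    (η c : ℝ) (hη : η < 0) (hc : η ^ 2 < c)
    (hdiv : ∫⁻ x in ball a 1, ENNReal.ofReal (‖x - a‖ ^ (2 * η - 2)) ∂(wMeasure μ) = ⊤) :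
    Tendsto
      (fun ε : ℝ => ∫⁻ x in ball a 1,
        ENNReal.ofReal ((ε + ‖x - a‖) ^ (2 * η) *
          (c / ‖x - a‖ ^ 2 - η ^ 2 / (ε + ‖x - a‖) ^ 2)) ∂(wMeasure μ))
      (nhdsWithin 0 (Set.Ioi 0)) (nhds ⊤) ∧
    ∀ M : ℝ, ∃ ε0 > (0 : ℝ), ∀ ε : ℝ, 0 < ε → ε < ε0 →
      ENNReal.ofReal M <
        ∫⁻ x in ball a 1,
          ENNReal.ofReal ((ε + ‖x - a‖) ^ (2 * η) *
            (c / ‖x - a‖ ^ 2 - η ^ 2 / (ε + ‖x - a‖) ^ 2)) ∂(wMeasure μ) := by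
  set ν := (wMeasure μ).withDensity fun x => ENNReal.ofReal (‖x - a‖ ^ (2 * η - 2))
  have hνa : ν {a} = 0 := by
    simp [ν, withDensity_apply _ (measurableSet_singleton a),
      Real.zero_rpow (by linarith : 2 * η - 2 ≠ 0)]
  have hν : ν (ball a 1 \ {a}) = ⊤ := by
    rwa [measure_sdiff_null hνa, withDensity_apply _ measurableSet_ball]
  have hK : ENNReal.ofReal (2 ^ (2 * η) * (c - η ^ 2)) ≠ 0 := by
    have := sub_pos.2 hc
    simp only [ne_eq, ENNReal.ofReal_eq_zero, not_le]
    positivity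
  have hlim : Tendsto (fun ε : ℝ => ∫⁻ x in ball a 1,
      ENNReal.ofReal (blowupIntegrand η c ε ‖x - a‖) ∂(wMeasure μ)) (𝓝[>] 0) (𝓝 ⊤) := by
    refine tendsto_nhds_top_mono ?_ (eventually_mem_nhdsWithin.mono fun ε hε =>
      mul_withDensity_diff_ball_le_setLIntegral_blowupIntegrand _ a measurableSet_ball
        hη.le hc.le hε)
    have := ENNReal.Tendsto.const_mul (tendsto_measure_diff_ball_nhdsGT ν (ball a 1) a)
      (Or.inr (ENNReal.ofReal_ne_top (r := 2 ^ (2 * η) * (c - η ^ 2))))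
    rwa [hν, ENNReal.mul_top hK] at this
  refine ⟨hlim, fun M => ?_⟩
  obtain ⟨ε0, hε0, hsub⟩ :=
    mem_nhdsGT_iff_exists_Ioo_subset.1 (hlim (Ioi_mem_nhds ENNReal.ofReal_lt_top))
  exact ⟨ε0, hε0, fun ε h0 h1 => hsub ⟨h0, h1⟩⟩

/-- The key limit in the optimality proof: if `η < 0`, `c > η²` and
`∫_{B(a,1)} |x-a|^{2η-2} dμ = +∞`, then
`∫_{B(a,1)} (ε+|x-a|)^{2η} [η²/(ε+|x-a|)² - c/|x-a|²] dμ → -∞` as `ε → 0⁺`.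
Since the integrand is nonpositive, this is expressed by saying that the (Lebesgue)
integral of its negation tends to `∞`; in particular for every `M` the integral of
the negation eventually exceeds `M`. -/
theorem optimality_integral_blowup {N : ℕ} (a : Euc N)
    (μ : Euc N → ℝ) (hμ0 : ∀ x, 0 ≤ μ x) (hμloc : LocallyIntegrable μ volume)
    (η c : ℝ) (hη : η < 0) (hc : η ^ 2 < c)
    (hdiv : ∫⁻ x in ball a 1, ENNReal.ofReal (‖x - a‖ ^ (2 * η - 2)) ∂(wMeasure μ) = ⊤) :
    Tendsto
      (fun ε : ℝ => ∫⁻ x in ball a 1,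
        ENNReal.ofReal ((ε + ‖x - a‖) ^ (2 * η) *
          (c / ‖x - a‖ ^ 2 - η ^ 2 / (ε + ‖x - a‖) ^ 2)) ∂(wMeasure μ))
      (nhdsWithin 0 (Set.Ioi 0)) (nhds ⊤) ∧
    ∀ M : ℝ, ∃ ε0 > (0 : ℝ), ∀ ε : ℝ, 0 < ε → ε < ε0 →
      ENNReal.ofReal M <
        ∫⁻ x in ball a 1,
          ENNReal.ofReal ((ε + ‖x - a‖) ^ (2 * η) *
            (c / ‖x - a‖ ^ 2 - η ^ 2 / (ε + ‖x - a‖) ^ 2)) ∂(wMeasure μ) :=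
  optimality_integral_blowup_general a μ η c hη hc hdiv

end
end
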